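/- (Completeness of normalisation, backward direction) For every PDDL formula F, every polarity z, and every world w: if w ∈ ⟨w_{⟦F⟧_z}⟩ then w ⊨_z F. -/

import Mathlib

/-- A polarity is `+` or `-`. -/
inductive Polarity : Type
  | pos
  | neg
deriving DecidableEq

/-- Negation of polarities: −+ = − and −− = +. -/
def Polarity.negP : Polarity → Polarity
  | pos => neg
  | neg => pos

/-- A state is a finite list of formula maps `A ↦ z`, represented as pairs `(a, z)`.
`emp` is `[]` and `(A ↦ z) * S` is `(a, z) :: S`. -/
abbrev PState (A : Type) : Type := List (A × Polarity)

/-- The subtyping relation `<:` on states: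
(NilSub) `S <: emp`; (ASub) `S' <: (A ↦ z) * S` whenever `S' <: S` and `(A ↦ z) ∈ S'`. -/
inductive StSub {A : Type} : PState A → PState A → Prop
  | nil (S : PState A) : StSub S []
  | cons {S' S : PState A} {a : A} {z : Polarity} :
      StSub S' S → (a, z) ∈ S' → StSub S' ((a, z) :: S)

/-- `A ∈ S` iff `(A ↦ +) ∈ S` or `(A ↦ −) ∈ S`. -/
def atomMem {A : Type} (a : A) (S : PState A) : Prop :=
  (a, Polarity.pos) ∈ S ∨ (a, Polarity.neg) ∈ S

/-- The override operator `⊔`: `P ⊔ emp = P`, and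
`P ⊔ ((A ↦ z) * Q) = ((A ↦ z) * (P with every formula map for the atom A removed)) ⊔ Q`. -/
def override {A : Type} [DecidableEq A] : PState A → PState A → PState A
  | P, [] => P
  | P, (a, z) :: Q => override ((a, z) :: P.filter (fun p => p.1 ≠ a)) Q

/-- `w ∈ ⟨w_S⟩`: `w` is a well-formed world for the state `S`. -/
def WfWorld {A : Type} (w : Set A) (S : PState A) : Prop :=
  ∀ a : A, ((a, Polarity.pos) ∈ S → a ∈ w) ∧ ((a, Polarity.neg) ∈ S → a ∉ w)

/-- PDDL formulae: ground atoms, negated ground atoms, and conjunctions. -/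
inductive Form (A : Type) : Type
  | atom (a : A)
  | natom (a : A)
  | conj (F F1 : Form A)

/-- Satisfaction of an atom: `w ⊨_+ A` iff `A ∈ w`; `w ⊨_− A` iff `A ∉ w`. -/
def satAtom {A : Type} (w : Set A) : Polarity → A → Prop
  | Polarity.pos, a => a ∈ w
  | Polarity.neg, a => a ∉ w

/-- Satisfaction `w ⊨_z F`; `w ⊨_z ¬A` iff `w ⊨_{−z} A`. -/
def sat {A : Type} (w : Set A) : Polarity → Form A → Prop
  | z, Form.atom a => satAtom w z a
  | z, Form.natom a => satAtom w z.negP a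
  | z, Form.conj F F1 => sat w z F ∧ sat w z F1

/-- Normalisation of formulae to states:
`⟦A⟧_z S = (A ↦ z) * S`, `⟦¬A⟧_z S = ⟦A⟧_{−z} S`, `⟦F ∧ F1⟧_z S = ⟦F1⟧_z (⟦F⟧_z S)`. -/
def normF {A : Type} : Form A → Polarity → PState A → PState A
  | Form.atom a, z, S => (a, z) :: S
  | Form.natom a, z, S => (a, z.negP) :: S
  | Form.conj F F1, z, S => normF F1 z (normF F z S)

section

variable {A : Type} {w : Set A}

theorem WfWorld.mono {S S' : PState A} (h : WfWorld w S') (hS : S ⊆ S') : WfWorld w S :=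
  fun a => ⟨fun hm => (h a).1 (hS hm), fun hm => (h a).2 (hS hm)⟩

theorem WfWorld.satAtom_of_mem {S : PState A} {a : A} {z : Polarity} (h : WfWorld w S)
    (hm : (a, z) ∈ S) : satAtom w z a := by
  cases z with
  | pos => exact (h a).1 hm
  | neg => exact (h a).2 hm

theorem subset_normF (F : Form A) (z : Polarity) (S : PState A) : S ⊆ normF F z S := by
  induction F generalizing S with
  | atom a => exact List.subset_cons_self _ _
  | natom a => exact List.subset_cons_self _ _
  | conj F F1 ih ih1 => exact List.Subset.trans (ih S) (ih1 _)

theorem sat_of_wfWorld_normF (F : Form A) (z : Polarity) (S : PState A)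
    (h : WfWorld w (normF F z S)) : sat w z F := by
  induction F generalizing S with
  | atom a => exact h.satAtom_of_mem List.mem_cons_self
  | natom a => exact h.satAtom_of_mem List.mem_cons_self
  | conj F F1 ih ih1 => exact ⟨ih S (h.mono (subset_normF F1 z _)), ih1 _ h⟩

end

theorem normalisation_complete_general {A : Type}
    (F : Form A) (z : Polarity) (w : Set A)
    (h : WfWorld w (normF F z [])) : sat w z F :=
  sat_of_wfWorld_normF F z [] h

theorem normalisation_complete {A : Type} [DecidableEq A]
    (F : Form A) (z : Polarity) (w : Set A)
    (h : WfWorld w (normF F z [])) : sat w z F :=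
  normalisation_complete_general F z w h
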